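/- arXiv:2002.09660 — 3 statements merged into one kernel-verified Lean document; each statement's English description precedes it below -/
import Mathlib

section
/- For every positive integer c and all integers k ≥ 2c, t ≥ c, there exists a set of k(t+2)+c−1 points in the plane that admits no t-tolerant partition into k parts; hence N(2,k,t) ≥ k(t+2)+c. -/
/-- Points of `ℝ^d`. -/
abbrev Pt (d : ℕ) := EuclideanSpace ℝ (Fin d)

noncomputable instance {d : ℕ} : DecidableEq (Pt d) := Classical.decEq _

/-- `Q` is a partition of the finite set `P` into `k` parts. -/
def IsPartition {d k : ℕ} (P : Finset (Pt d)) (Q : Fin k → Finset (Pt d)) : Prop :=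
  (∀ i j : Fin k, i ≠ j → Disjoint (Q i) (Q j)) ∧ P = Finset.univ.biUnion Q

/-- The partition `Q` of `P` is `t`-tolerant: after removing any set `Y` of at most `t`
points, the convex hulls of the parts still have a common point. -/
def IsTolerant {d k : ℕ} (t : ℕ) (P : Finset (Pt d)) (Q : Fin k → Finset (Pt d)) : Prop :=
  ∀ Y ⊆ P, Y.card ≤ t →
    (⋂ i : Fin k, convexHull ℝ ((Q i \ Y : Finset (Pt d)) : Set (Pt d))).Nonempty

/-!
The witness is a regular `(k(t+2) - 1)`-gon inscribed in the unit circle together with `c` points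
within `1/4` of its center. In a `t`-tolerant partition every part has more than `t` points. A part
of exactly `t + 1` points contains a vertex; deleting its other `t` points leaves that vertex alone,
and a vertex is exposed, so no other hull reaches it. Otherwise every part has at least `t + 2`
points; the total count leaves fewer than `c` parts with more, and at most `c` parts contain a
center point, so as `k ≥ 2c` some part consists of exactly `t + 2` vertices. By pigeonhole two of
them, `α` and `α + g`, are `g < k` steps apart; the `g - 1` vertices between them meet at most
`g - 1` parts, so some other part avoids that arc. Deleting the other `t` points of the first part
leaves the chord `[α, α + g]`, which a line strictly separates from that part: its remaining
vertices lie beyond the chord, and the chord is farther than `1/2` from the center.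
-/

open Real RealInnerProductSpace Finset Function

lemma disjoint_convexHull_of_lt_of_le {E : Type*} [AddCommGroup E] [Module ℝ E]
    (f : E →ₗ[ℝ] ℝ) {A B : Set E} {r : ℝ} (hA : ∀ x ∈ A, f x < r) (hB : ∀ x ∈ B, r ≤ f x) :
    Disjoint (convexHull ℝ A) (convexHull ℝ B) := by
  have hA' : convexHull ℝ A ⊆ {x | f x < r} :=
    convexHull_min hA (convex_halfSpace_lt f.isLinear r)
  have hB' : convexHull ℝ B ⊆ {x | r ≤ f x} :=
    convexHull_min hB (convex_halfSpace_ge f.isLinear r)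
  exact Set.disjoint_left.2 fun x hxA hxB => (show f x < r from hA' hxA).not_ge (hB' hxB)

section Tolerance

variable {d k t : ℕ} {P : Finset (Pt d)} {Q : Fin k → Finset (Pt d)}

lemma IsPartition.subset (hQ : IsPartition P Q) (i : Fin k) : Q i ⊆ P := by
  rw [hQ.2]
  exact subset_biUnion_of_mem Q (mem_univ i)

lemma IsPartition.card_eq_sum (hQ : IsPartition P Q) : #P = ∑ i, #(Q i) := by
  rw [hQ.2, card_biUnion fun i _ j _ hij => hQ.1 i j hij]

lemma IsTolerant.lt_card (hT : IsTolerant t P Q) (hQ : IsPartition P Q) (i : Fin k) :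
    t < #(Q i) := by
  by_contra! h
  obtain ⟨x, hx⟩ := hT (Q i) (hQ.subset i) h
  simpa using Set.mem_iInter.1 hx i

lemma IsTolerant.convexHull_inter_nonempty (hT : IsTolerant t P Q) (hQ : IsPartition P Q)
    {a b : Fin k} (hba : b ≠ a) {R : Finset (Pt d)} (hR : R ⊆ Q a) (hcard : #(Q a) ≤ #R + t) :
    (convexHull ℝ (R : Set (Pt d)) ∩ convexHull ℝ (Q b : Set (Pt d))).Nonempty := by
  have hY : #(Q a \ R) ≤ t := by
    rw [card_sdiff_of_subset hR]
    omega
  obtain ⟨x, hx⟩ := hT (Q a \ R) (sdiff_subset.trans (hQ.subset a)) hY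
  have ha := Set.mem_iInter.1 hx a
  have hb := Set.mem_iInter.1 hx b
  rw [Finset.sdiff_sdiff_eq_self hR] at ha
  rw [sdiff_eq_self_of_disjoint ((hQ.1 b a hba).mono_right sdiff_subset)] at hb
  exact ⟨x, ha, hb⟩

lemma not_isTolerant_of_separated (hQ : IsPartition P Q) {a b : Fin k} (hba : b ≠ a)
    {R : Finset (Pt d)} (hR : R ⊆ Q a) (hcard : #(Q a) ≤ #R + t) (f : Pt d →ₗ[ℝ] ℝ) {r : ℝ}
    (hfR : ∀ x ∈ R, r ≤ f x) (hfQ : ∀ x ∈ Q b, f x < r) : ¬ IsTolerant t P Q := fun hT =>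
  Set.not_disjoint_iff_nonempty_inter.2 (hT.convexHull_inter_nonempty hQ hba hR hcard)
    (disjoint_convexHull_of_lt_of_le f hfQ hfR).symm

end Tolerance

section Counting

variable {ι α : Type*} [Fintype ι] [DecidableEq α] {Q : ι → Finset α}

lemma card_filter_inter_nonempty_le (hQ : Pairwise (Disjoint on Q)) (C : Finset α) :
    #{i | (Q i ∩ C).Nonempty} ≤ #C := by
  set J : Finset ι := {i | (Q i ∩ C).Nonempty}
  calc #J = ∑ _ ∈ J, 1 := card_eq_sum_ones J
    _ ≤ ∑ i ∈ J, #(Q i ∩ C) := sum_le_sum fun i hi => card_pos.2 (mem_filter.1 hi).2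
    _ = #(J.biUnion fun i => Q i ∩ C) :=
      (card_biUnion fun i _ j _ hij => ((hQ hij).mono inter_subset_left inter_subset_left)).symm
    _ ≤ #C := card_le_card (biUnion_subset.2 fun _ _ => inter_subset_right)

lemma exists_ne_disjoint (hQ : Pairwise (Disjoint on Q)) {C : Finset α}
    (hC : #C + 1 < Fintype.card ι) (a : ι) : ∃ b ≠ a, Disjoint (Q b) C := by
  classical
  set meet : Finset ι := {i | (Q i ∩ C).Nonempty}
  obtain ⟨b, -, hb⟩ := exists_mem_notMem_of_card_lt_card (s := insert a meet) (t := univ) <| by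
    calc #(insert a meet) ≤ #meet + 1 := card_insert_le _ _
      _ ≤ #C + 1 := by gcongr; exact card_filter_inter_nonempty_le hQ C
      _ < #univ := by rwa [card_univ]
  simp only [meet, mem_insert, mem_filter, mem_univ, true_and, not_or,
    not_nonempty_iff_eq_empty] at hb
  exact ⟨b, hb.1, disjoint_iff_inter_eq_empty.2 hb.2⟩

lemma exists_card_eq_disjoint {t c : ℕ} (hQ : Pairwise (Disjoint on Q))
    (hQt : ∀ i, t + 2 ≤ #(Q i)) (hsum : ∑ i, #(Q i) < Fintype.card ι * (t + 2) + c)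
    {C : Finset α} (hC : #C ≤ c) (hk : 2 * c ≤ Fintype.card ι) :
    ∃ a, #(Q a) = t + 2 ∧ Disjoint (Q a) C := by
  classical
  set big : Finset ι := {i | t + 2 < #(Q i)}
  set meet : Finset ι := {i | (Q i ∩ C).Nonempty}
  have hbig : #big < c := by
    have h : ∑ i, (t + 2 + if t + 2 < #(Q i) then 1 else 0) ≤ ∑ i, #(Q i) :=
      sum_le_sum fun i _ => by have := hQt i; split_ifs <;> omega
    rw [sum_add_distrib, sum_const, card_univ, smul_eq_mul, ← card_filter] at h
    change _ + #big ≤ _ at h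
    omega
  have hmeet : #meet ≤ #C := card_filter_inter_nonempty_le hQ C
  obtain ⟨a, -, ha⟩ := exists_mem_notMem_of_card_lt_card (s := big ∪ meet) (t := univ) <|
    (card_union_le big meet).trans_lt (by rw [card_univ]; omega)
  simp only [big, meet, mem_union, mem_filter, mem_univ, true_and, not_or, not_lt,
    not_nonempty_iff_eq_empty] at ha
  exact ⟨a, le_antisymm ha.1 (hQt a), disjoint_iff_inter_eq_empty.2 ha.2⟩

end Counting

/-- Otherwise the translates `x + j` (`x ∈ I`, `j < k`) would be pairwise distinct, so
`#I * k ≤ m`. -/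
lemma ZMod.exists_add_mem_of_lt_card_mul {m k : ℕ} [NeZero m] {I : Finset (ZMod m)}
    (h : m < #I * k) : ∃ α ∈ I, ∃ g : ℕ, 0 < g ∧ g < k ∧ α + g ∈ I := by
  obtain ⟨⟨x, j⟩, hxj, ⟨y, j'⟩, hyj', hne, heq⟩ :=
    exists_ne_map_eq_of_card_lt_of_maps_to (s := I ×ˢ range k) (t := univ)
      (f := fun p => p.1 + (p.2 : ZMod m)) (by simpa [ZMod.card] using h)
      (fun _ _ => mem_coe.2 (mem_univ _))
  simp only [mem_product, mem_range] at hxj hyj'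
  simp only at heq
  rcases lt_trichotomy j j' with hjj | rfl | hjj
  · refine ⟨y, hyj'.1, j' - j, by omega, by omega, ?_⟩
    rw [Nat.cast_sub hjj.le]
    convert hxj.1 using 1
    linear_combination -heq
  · exact absurd (by simpa using heq) hne
  · refine ⟨x, hxj.1, j - j', by omega, by omega, ?_⟩
    rw [Nat.cast_sub hjj.le]
    convert hyj'.1 using 1
    linear_combination heq

lemma cos_lt_cos_of_lt_of_lt_two_pi_sub {x y : ℝ} (hy : 0 ≤ y) (hyx : y < x)
    (hx : x < 2 * π - y) : cos x < cos y := by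
  rcases le_or_gt x π with hxπ | hxπ
  · exact strictAntiOn_cos ⟨hy, by linarith⟩ ⟨by linarith, hxπ⟩ hyx
  · rw [← cos_two_pi_sub x]
    exact strictAntiOn_cos ⟨hy, by linarith⟩ ⟨by linarith, by linarith⟩ (by linarith)

/-- The points at angles `x` and `x - θ` lie strictly beyond the chord joining the points at
angles `0` and `θ`. -/
lemma cos_add_cos_sub_lt {θ x : ℝ} (hθ : 0 < θ) (hθπ : θ < π) (hθx : θ < x) (hx : x < 2 * π) :
    cos x + cos (x - θ) < 1 + cos θ := by
  have hsum : cos x + cos (x - θ) = 2 * cos (x - θ / 2) * cos (θ / 2) := by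
    rw [cos_add_cos]
    ring_nf
  have hone : 1 + cos θ = 2 * cos (θ / 2) * cos (θ / 2) := by
    have h := cos_sq (θ / 2)
    rw [show 2 * (θ / 2) = θ by ring] at h
    linarith
  have hpos : 0 < cos (θ / 2) := cos_pos_of_mem_Ioo ⟨by linarith, by linarith⟩
  have hlt : cos (x - θ / 2) < cos (θ / 2) :=
    cos_lt_cos_of_lt_of_lt_two_pi_sub (by linarith) (by linarith) (by linarith)
  rw [hsum, hone]
  gcongr

lemma cos_two_pi_mul_div_eq_of_intCast_eq {m : ℕ} {a b : ℤ} (h : (a : ZMod m) = b) :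
    cos (2 * π * a / m) = cos (2 * π * b / m) := by
  rcases eq_or_ne m 0 with rfl | hm
  · simp
  obtain ⟨n, hn⟩ := ((ZMod.intCast_eq_intCast_iff a b m).1 h).dvd
  have hangle : 2 * π * b / m = 2 * π * a / m + n * (2 * π) := by
    rw [show (b : ℝ) = a + m * n by exact_mod_cast (by linarith : b = a + m * n)]
    field_simp
  rw [hangle, cos_add_int_mul_two_pi]

noncomputable def unitVec (θ : ℝ) : Pt 2 := !₂[cos θ, sin θ]

lemma inner_unitVec (θ φ : ℝ) : ⟪unitVec θ, unitVec φ⟫ = cos (φ - θ) := by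
  simp [unitVec, PiLp.inner_apply, Fin.sum_univ_two, cos_sub]

lemma norm_unitVec (θ : ℝ) : ‖unitVec θ‖ = 1 := by
  rw [norm_eq_sqrt_real_inner, inner_unitVec, sub_self, cos_zero, sqrt_one]

section Polygon

variable {m : ℕ}

noncomputable def polygonVertex (m : ℕ) (i : ZMod m) : Pt 2 := unitVec (2 * π * i.val / m)

lemma norm_polygonVertex (i : ZMod m) : ‖polygonVertex m i‖ = 1 := norm_unitVec _

variable [NeZero m]

lemma inner_polygonVertex {i j : ZMod m} (n : ℤ) (hn : (n : ZMod m) = j - i) :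
    ⟪polygonVertex m i, polygonVertex m j⟫ = cos (2 * π * n / m) := by
  rw [polygonVertex, polygonVertex, inner_unitVec,
    show 2 * π * j.val / m - 2 * π * i.val / m = 2 * π * ((j.val - i.val : ℤ) : ℝ) / m by
      push_cast; ring]
  apply cos_two_pi_mul_div_eq_of_intCast_eq
  simp [hn]

lemma inner_polygonVertex_lt_one {i j : ZMod m} (hij : i ≠ j) :
    ⟪polygonVertex m i, polygonVertex m j⟫ < 1 := by
  have hm : (0 : ℝ) < m := by exact_mod_cast Nat.pos_of_neZero m
  have hpos : 0 < (j - i).val := (ZMod.val_pos).2 (sub_ne_zero.2 hij.symm)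
  have hlt : ((j - i).val : ℝ) < m := by exact_mod_cast ZMod.val_lt (j - i)
  rw [inner_polygonVertex (j - i).val (by simp)]
  have := cos_lt_cos_of_lt_of_lt_two_pi_sub le_rfl
    (show 0 < 2 * π * ((j - i).val : ℤ) / m by push_cast; positivity)
    (by rw [div_lt_iff₀ hm]; push_cast; nlinarith [pi_pos])
  rwa [cos_zero] at this

lemma inner_polygonVertex_add_natCast (α : ZMod m) (g : ℕ) :
    ⟪polygonVertex m α, polygonVertex m (α + g)⟫ = cos (2 * π * g / m) := by
  simpa using inner_polygonVertex (i := α) (j := α + g) g (by simp)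

lemma polygonVertex_injective : Injective (polygonVertex m) := fun i j h => by
  by_contra hij
  have := inner_polygonVertex_lt_one hij
  rw [h, real_inner_self_eq_norm_sq, norm_polygonVertex] at this
  norm_num at this

lemma inner_add_polygonVertex_lt {α i : ZMod m} {g : ℕ} (hg : 0 < g) (h2g : 2 * g < m)
    (harc : ∀ j ≤ g, i ≠ α + j) :
    ⟪polygonVertex m α + polygonVertex m (α + g), polygonVertex m i⟫ <
      1 + cos (2 * π * g / m) := by
  have hm : (0 : ℝ) < m := by exact_mod_cast Nat.pos_of_neZero m
  set J := (i - α).val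
  have hJg : g < J := by
    by_contra! h
    exact harc J h (by simp [J])
  have hJm : (J : ℝ) < m := by exact_mod_cast ZMod.val_lt (i - α)
  have hgJ : (g : ℝ) < J := by exact_mod_cast hJg
  have hm2g : 2 * π * g < π * m := by
    have : 2 * (g : ℝ) < m := by exact_mod_cast h2g
    nlinarith [pi_pos]
  rw [inner_add_left, inner_polygonVertex J (by simp [J]),
    inner_polygonVertex ((J : ℤ) - g) (by simp [J]; ring), Int.cast_natCast,
    show 2 * π * (((J : ℤ) - g : ℤ) : ℝ) / m = 2 * π * J / m - 2 * π * g / m by push_cast; ring]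
  have hg' : (0 : ℝ) < g := by exact_mod_cast hg
  exact cos_add_cos_sub_lt (by positivity) (by rw [div_lt_iff₀ hm]; linarith) (by gcongr)
    (by rw [div_lt_iff₀ hm]; nlinarith [pi_pos])

end Polygon

noncomputable def centerPoint (j : ℕ) : Pt 2 := ((j : ℝ) + 4)⁻¹ • unitVec 0

lemma norm_centerPoint_le (j : ℕ) : ‖centerPoint j‖ ≤ 1 / 4 := by
  rw [centerPoint, norm_smul, norm_unitVec, mul_one, norm_inv, norm_of_nonneg (by positivity),
    one_div]
  gcongr
  simp

lemma centerPoint_injective : Injective centerPoint := fun i j h => by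
  have hne : unitVec 0 ≠ 0 := norm_ne_zero_iff.1 (by rw [norm_unitVec]; exact one_ne_zero)
  have := smul_left_injective ℝ hne h
  simpa using this

noncomputable def centerPoints (c : ℕ) : Finset (Pt 2) := (range c).image centerPoint

lemma card_centerPoints (c : ℕ) : #(centerPoints c) = c := by
  rw [centerPoints, card_image_of_injective _ centerPoint_injective, card_range]

noncomputable def polygonWithCenter (m c : ℕ) [NeZero m] : Finset (Pt 2) :=
  univ.image (polygonVertex m) ∪ centerPoints c

section PolygonWithCenter

variable {m c : ℕ} [NeZero m]

lemma card_polygonWithCenter : #(polygonWithCenter m c) = m + c := by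
  have hdisj : Disjoint (univ.image (polygonVertex m)) (centerPoints c) := by
    refine disjoint_left.2 fun s hv hc => ?_
    obtain ⟨i, -, rfl⟩ := mem_image.1 hv
    obtain ⟨j, -, hj⟩ := mem_image.1 hc
    have := norm_centerPoint_le j
    rw [hj, norm_polygonVertex] at this
    norm_num at this
  rw [polygonWithCenter, card_union_of_disjoint hdisj,
    card_image_of_injective _ polygonVertex_injective, card_univ, ZMod.card, card_centerPoints]

lemma inner_le_of_mem_centerPoints (u : Pt 2) {s : Pt 2} (hs : s ∈ centerPoints c) :
    ⟪u, s⟫ ≤ ‖u‖ / 4 := by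
  obtain ⟨j, -, rfl⟩ := mem_image.1 hs
  calc ⟪u, centerPoint j⟫ ≤ ‖u‖ * ‖centerPoint j‖ := real_inner_le_norm _ _
    _ ≤ ‖u‖ * (1 / 4) := by gcongr; exact norm_centerPoint_le j
    _ = ‖u‖ / 4 := by ring

lemma inner_polygonVertex_lt_one_of_mem {p : ZMod m} {s : Pt 2} (hs : s ∈ polygonWithCenter m c)
    (hne : s ≠ polygonVertex m p) : ⟪polygonVertex m p, s⟫ < 1 := by
  rcases mem_union.1 hs with hv | hc
  · obtain ⟨i, -, rfl⟩ := mem_image.1 hv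
    exact inner_polygonVertex_lt_one fun h => hne (h ▸ rfl)
  · have := inner_le_of_mem_centerPoints (polygonVertex m p) hc
    rw [norm_polygonVertex] at this
    linarith

lemma inner_add_polygonVertex_lt_of_mem {α : ZMod m} {g : ℕ} {s : Pt 2}
    (hs : s ∈ polygonWithCenter m c) (hg : 0 < g) (h3g : 3 * g < m)
    (harc : ∀ j ≤ g, s ≠ polygonVertex m (α + j)) :
    ⟪polygonVertex m α + polygonVertex m (α + g), s⟫ < 1 + cos (2 * π * g / m) := by
  rcases mem_union.1 hs with hv | hc
  · obtain ⟨i, -, rfl⟩ := mem_image.1 hv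
    exact inner_add_polygonVertex_lt hg (by omega) fun j hj h => harc j hj (h ▸ rfl)
  · have hm : (0 : ℝ) < m := by exact_mod_cast Nat.pos_of_neZero m
    have hnorm : ‖polygonVertex m α + polygonVertex m (α + g)‖ ≤ 2 := by
      grw [norm_add_le, norm_polygonVertex, norm_polygonVertex]
      norm_num
    have hθ : 2 * π * g / m < π - π / 3 := by
      rw [div_lt_iff₀ hm]
      have : 3 * (g : ℝ) < m := by exact_mod_cast h3g
      nlinarith [mul_pos pi_pos (sub_pos.2 this)]
    have hcos : -(1 / 2) < cos (2 * π * g / m) := by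
      rw [← cos_pi_div_three, ← cos_pi_sub]
      exact cos_lt_cos_of_lt_of_lt_two_pi_sub (by positivity) hθ (by linarith [pi_pos])
    have := inner_le_of_mem_centerPoints (polygonVertex m α + polygonVertex m (α + g)) hc
    linarith

end PolygonWithCenter

section Partitions

variable {m c k t : ℕ} [NeZero m] {Q : Fin k → Finset (Pt 2)}

lemma not_isTolerant_of_card_eq_succ (hQ : IsPartition (polygonWithCenter m c) Q) (hk : 2 ≤ k)
    {a : Fin k} (ha : #(Q a) = t + 1) (hct : c ≤ t) :
    ¬ IsTolerant t (polygonWithCenter m c) Q := by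
  obtain ⟨v, hva, hvc⟩ := not_subset.1 fun h : Q a ⊆ centerPoints c => by
    have := card_le_card h
    rw [ha, card_centerPoints] at this
    omega
  obtain ⟨p, -, rfl⟩ := mem_image.1 ((mem_union.1 (hQ.subset a hva)).resolve_right hvc)
  have : Nontrivial (Fin k) := Fin.nontrivial_iff_two_le.2 hk
  obtain ⟨b, hba⟩ := exists_ne a
  refine not_isTolerant_of_separated hQ hba (singleton_subset_iff.2 hva) (by simp [ha])
    (innerₛₗ ℝ (polygonVertex m p)) (r := 1) ?_ fun s hs => ?_
  · simp [norm_polygonVertex]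
  · exact inner_polygonVertex_lt_one_of_mem (hQ.subset b hs)
      fun h => disjoint_left.1 (hQ.1 b a hba) hs (h ▸ hva)

lemma not_isTolerant_of_card_eq_add_two (hQ : IsPartition (polygonWithCenter m c) Q)
    {a : Fin k} (ha : #(Q a) = t + 2) (hC : Disjoint (Q a) (centerPoints c))
    (hm : m < (t + 2) * k) (h3k : 3 * (k - 1) < m) :
    ¬ IsTolerant t (polygonWithCenter m c) Q := by
  set I : Finset (ZMod m) := {i | polygonVertex m i ∈ Q a}
  have hQaI : Q a ⊆ I.image (polygonVertex m) := fun s hs => by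
    obtain ⟨i, -, rfl⟩ := mem_image.1
      ((mem_union.1 (hQ.subset a hs)).resolve_right (disjoint_left.1 hC hs))
    exact mem_image_of_mem _ (mem_filter.2 ⟨mem_univ i, hs⟩)
  obtain ⟨α, hα, g, hg, hgk, hβ⟩ := ZMod.exists_add_mem_of_lt_card_mul (I := I) (k := k) <| by
    have : t + 2 ≤ #I := ha ▸ (card_le_card hQaI).trans card_image_le
    exact hm.trans_le (Nat.mul_le_mul_right k this)
  simp only [I, mem_filter, mem_univ, true_and] at hα hβ
  have hαβ : polygonVertex m α ≠ polygonVertex m (α + g) := by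
    rw [polygonVertex_injective.ne_iff, ne_eq, left_eq_add, ZMod.natCast_eq_zero_iff]
    exact fun h => (Nat.le_of_dvd hg h).not_gt (by omega)
  set arc := (Ioo 0 g).image fun j : ℕ => polygonVertex m (α + j)
  obtain ⟨b, hba, hb⟩ := exists_ne_disjoint hQ.1 (C := arc) (a := a) <| by
    have : #arc ≤ g - 1 := card_image_le.trans (by simp)
    rw [Fintype.card_fin]
    omega
  refine not_isTolerant_of_separated hQ hba (R := {polygonVertex m α, polygonVertex m (α + g)})
    (insert_subset hα (singleton_subset_iff.2 hβ)) (by rw [card_pair hαβ, ha, add_comm])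
    (innerₛₗ ℝ (polygonVertex m α + polygonVertex m (α + g))) (r := 1 + cos (2 * π * g / m))
    ?_ fun s hs => ?_
  · simp only [mem_insert, mem_singleton, forall_eq_or_imp, forall_eq, innerₛₗ_apply_apply,
      inner_add_left, real_inner_self_eq_norm_sq, norm_polygonVertex,
      inner_polygonVertex_add_natCast, real_inner_comm (polygonVertex m α), one_pow]
    exact ⟨le_rfl, (add_comm _ _).le⟩
  · refine inner_add_polygonVertex_lt_of_mem (hQ.subset b hs) hg (by omega) fun j hj h => ?_
    subst h
    rcases Nat.eq_zero_or_pos j with rfl | hj0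
    · exact disjoint_left.1 (hQ.1 b a hba) hs (by simpa using hα)
    rcases hj.lt_or_eq with hjg | rfl
    · exact disjoint_left.1 hb hs (mem_image_of_mem _ (mem_Ioo.2 ⟨hj0, hjg⟩))
    · exact disjoint_left.1 (hQ.1 b a hba) hs hβ

end Partitions

/-- Theorem 2: for every positive integer `c` and all `k ≥ 2c`, `t ≥ c`, there is a set of
`k(t+2) + c - 1` points in the plane with no `t`-tolerant partition into `k` parts;
hence `N(2,k,t) ≥ k(t+2) + c`. -/
theorem lower_bound_N2kt (c k t : ℕ) (hc : 1 ≤ c) (hk : 2 * c ≤ k) (ht : c ≤ t) :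
    ∃ S : Finset (Pt 2), S.card = k * (t + 2) + c - 1 ∧
      ∀ Q : Fin k → Finset (Pt 2), IsPartition S Q → ¬ IsTolerant t S Q := by
  have h3k : 3 * k ≤ k * (t + 2) := by rw [mul_comm]; exact Nat.mul_le_mul_left k (by omega)
  set m := k * (t + 2) - 1
  have : NeZero m := ⟨by omega⟩
  refine ⟨polygonWithCenter m c, by rw [card_polygonWithCenter]; omega, fun Q hQ hT => ?_⟩
  by_cases hsmall : ∃ a, #(Q a) ≤ t + 1
  · obtain ⟨a, ha⟩ := hsmall
    exact not_isTolerant_of_card_eq_succ hQ (by omega) (le_antisymm ha (hT.lt_card hQ a)) ht hT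
  · push Not at hsmall
    obtain ⟨a, ha, hC⟩ := exists_card_eq_disjoint hQ.1 hsmall
      (by rw [← hQ.card_eq_sum, card_polygonWithCenter, Fintype.card_fin]; omega)
      (card_centerPoints c).le (by rwa [Fintype.card_fin])
    exact not_isTolerant_of_card_eq_add_two hQ ha hC (by rw [mul_comm]; omega) (by omega) hT
end

section
/- For every integer t ≥ 3, there exists a set of 2t+5 points in the plane that admits no t-tolerant partition into two parts; hence N(2,2,t) ≥ 2t+6. -/
/-- A two-part partition `A, B` of `P` is `t`-tolerant: after removing any set `Y` of at
most `t` points, the convex hulls of the two parts still intersect. -/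
def IsTolerant2 {d : ℕ} (t : ℕ) (P A B : Finset (Pt d)) : Prop :=
  ∀ Y ⊆ P, Y.card ≤ t →
    (convexHull ℝ ((A \ Y : Finset (Pt d)) : Set (Pt d)) ∩
      convexHull ℝ ((B \ Y : Finset (Pt d)) : Set (Pt d))).Nonempty

/-!
The witness consists of the points `pᵢ = (i, i²)`, `1 ≤ i ≤ 2t + 2`, of a parabola and three points
`q₀, q₁, q₂` just inside the edges `p₁p₂, p₃p₄, p₅p₆`. If a subset `C` of `S` can be cut off by a
line, a `t`-tolerant partition `A, B` of `S` satisfies `t < |B ∩ C| + |A \ C|`, since otherwise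
removing these points leaves the two parts on opposite sides of the line. Every part has more than
`t ≥ 3` points, hence contains some `pᵢ`, and `pᵢ` alone can be cut off, so both parts have at least
`t + 2` points; say `|B| = t + 2` and `|A| = t + 3`. Any two of `p₂ⱼ₊₁, p₂ⱼ₊₂, qⱼ` can be cut off,
so `B` contains at most one of them, hence at most three of the nine points `p₁, …, p₆, q₀, q₁, q₂`;
cutting off these nine points then forces `|A| > t + 3`. All the cuts are by chords of the parabola.
-/

open Finset

section Separation

variable {d t : ℕ} {S A B C : Finset (Pt d)}

theorem IsTolerant2.symm (hT : IsTolerant2 t S A B) : IsTolerant2 t S B A := fun Y hY hYt =>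
  (hT Y hY hYt).mono fun _ hz => ⟨hz.2, hz.1⟩

theorem IsTolerant2.lt_card_right (hT : IsTolerant2 t S A B) (hBS : B ⊆ S) : t < #B := by
  by_contra h
  obtain ⟨z, -, hz⟩ := hT B hBS (not_lt.1 h)
  simp at hz

def IsCutOff (S C : Finset (Pt d)) : Prop :=
  Disjoint (convexHull ℝ (C : Set (Pt d))) (convexHull ℝ ((S \ C : Finset (Pt d)) : Set (Pt d)))

theorem IsTolerant2.lt_card_inter_add_card_sdiff (hT : IsTolerant2 t S A B) (hS : A ∪ B = S)
    (hC : IsCutOff S C) : t < #(B ∩ C) + #(A \ C) := by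
  by_contra! h
  have hYS : B ∩ C ∪ A \ C ⊆ S := by
    rw [← hS]
    exact union_subset (inter_subset_left.trans subset_union_right)
      (sdiff_subset.trans subset_union_left)
  obtain ⟨z, hzA, hzB⟩ := hT _ hYS ((card_union_le _ _).trans h)
  have hA : A \ (B ∩ C ∪ A \ C) ⊆ C := fun x hx => by
    simp only [mem_sdiff, mem_union, mem_inter] at hx; tauto
  have hB : B \ (B ∩ C ∪ A \ C) ⊆ S \ C := fun x hx => by
    simp only [mem_sdiff, mem_union, mem_inter, ← hS] at hx ⊢; tauto
  exact Set.disjoint_left.1 hC (convexHull_mono (by exact_mod_cast hA) hzA)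
    (convexHull_mono (by exact_mod_cast hB) hzB)

theorem IsTolerant2.add_card_lt_card (hT : IsTolerant2 t S A B) (hS : A ∪ B = S)
    (hd : Disjoint A B) (hCB : C ⊆ B) (hC : IsCutOff S C) : t + #C < #B := by
  have h := hT.symm.lt_card_inter_add_card_sdiff (union_comm A B ▸ hS) hC
  rw [disjoint_iff_inter_eq_empty.1 (hd.mono_right hCB), card_empty,
    card_sdiff_of_subset hCB] at h
  have := card_le_card hCB
  omega

end Separation

theorem disjoint_convexHull_of_lt_of_lt {E : Type*} [AddCommGroup E] [Module ℝ E]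
    (f : E →ₗ[ℝ] ℝ) {s u : Set E} {τ : ℝ} (hs : ∀ x ∈ s, f x < τ) (hu : ∀ x ∈ u, τ < f x) :
    Disjoint (convexHull ℝ s) (convexHull ℝ u) := by
  rw [Set.disjoint_left]
  intro x hxs hxu
  have h₁ := convexHull_min hs (convex_halfSpace_lt f.isLinear τ) hxs
  have h₂ := convexHull_min hu (convex_halfSpace_gt f.isLinear τ) hxu
  exact lt_asymm (show f x < τ from h₁) h₂

/-- `lensValue s P < r` says that `P` lies below the chord of the parabola `y = x²` between the
abscissae `s ± √r`. -/
def lensValue (s : ℝ) (P : Pt 2) : ℝ := (P 0 - s) ^ 2 + (P 1 - P 0 ^ 2)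

theorem disjoint_convexHull_of_lensValue {s r : ℝ} {C D : Set (Pt 2)}
    (hC : ∀ P ∈ C, lensValue s P < r) (hD : ∀ P ∈ D, r < lensValue s P) :
    Disjoint (convexHull ℝ C) (convexHull ℝ D) := by
  let f : Pt 2 →ₗ[ℝ] ℝ :=
    (EuclideanSpace.proj 1 - (2 * s) • EuclideanSpace.proj 0 : Pt 2 →L[ℝ] ℝ)
  have hf (P : Pt 2) : lensValue s P = f P + s ^ 2 := by
    simp [f, lensValue]; ring
  refine disjoint_convexHull_of_lt_of_lt f (τ := r - s ^ 2) (fun P hP => ?_) (fun P hP => ?_)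
  · linarith [hf P, hC P hP]
  · linarith [hf P, hD P hP]

theorem isCutOff_of_lensValue {S C : Finset (Pt 2)} (s r : ℝ) (hC : ∀ P ∈ C, lensValue s P < r)
    (hS : ∀ P ∈ S, P ∉ C → r < lensValue s P) : IsCutOff S C :=
  disjoint_convexHull_of_lensValue hC fun P hP => by
    rw [coe_sdiff, Set.mem_sdiff] at hP
    exact hS P hP.1 hP.2

noncomputable def lift (x h : ℝ) : Pt 2 := !₂[x, x ^ 2 + h]

@[simp] theorem lift_inj {x h x' h' : ℝ} : lift x h = lift x' h' ↔ x = x' ∧ h = h' := by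
  constructor
  · intro he
    have h0 := congrArg (fun P : Pt 2 => P 0) he
    have h1 := congrArg (fun P : Pt 2 => P 1) he
    simp only [lift, PiLp.toLp_apply, Matrix.cons_val_zero, Matrix.cons_val_one] at h0 h1
    subst h0
    exact ⟨rfl, by linarith⟩
  · rintro ⟨rfl, rfl⟩; rfl

@[simp] theorem lensValue_lift (s x h : ℝ) : lensValue s (lift x h) = (x - s) ^ 2 + h := by
  simp [lensValue, lift]

noncomputable def parabolaPt (i : ℕ) : Pt 2 := lift i 0

/-- `interiorPt j` lies `1/8` above the midpoint of the edge from `parabolaPt (2j+1)` to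
`parabolaPt (2j+2)`, hence inside the convex polygon spanned by the parabola points. -/
noncomputable def interiorPt (j : ℕ) : Pt 2 := lift (2 * j + 3 / 2) (3 / 8)

noncomputable def witness (n : ℕ) : Finset (Pt 2) :=
  (Icc 1 n).image parabolaPt ∪ (range 3).image interiorPt

@[simp] theorem parabolaPt_inj {i i' : ℕ} : parabolaPt i = parabolaPt i' ↔ i = i' := by
  simp [parabolaPt]

@[simp] theorem interiorPt_inj {j j' : ℕ} : interiorPt j = interiorPt j' ↔ j = j' := by
  simp [interiorPt]

@[simp] theorem parabolaPt_ne_interiorPt (i j : ℕ) : parabolaPt i ≠ interiorPt j := by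
  norm_num [parabolaPt, interiorPt]

@[simp] theorem interiorPt_ne_parabolaPt (i j : ℕ) : interiorPt j ≠ parabolaPt i :=
  (parabolaPt_ne_interiorPt i j).symm

theorem card_witness (n : ℕ) : #(witness n) = n + 3 := by
  rw [witness, card_union_of_disjoint, card_image_of_injective _ fun _ _ => parabolaPt_inj.1,
    card_image_of_injective _ fun _ _ => interiorPt_inj.1, Nat.card_Icc, card_range]
  · omega
  · simp only [disjoint_left, mem_image]
    rintro _ ⟨i, -, rfl⟩ ⟨j, -, h⟩
    exact parabolaPt_ne_interiorPt i j h.symm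

theorem witness_mono {m n : ℕ} (h : m ≤ n) : witness m ⊆ witness n :=
  union_subset_union (image_subset_image (Icc_subset_Icc_right h)) subset_rfl

@[simp] theorem parabolaPt_mem_witness {n i : ℕ} :
    parabolaPt i ∈ witness n ↔ 1 ≤ i ∧ i ≤ n := by
  simp [witness]

@[simp] theorem interiorPt_mem_witness {n j : ℕ} : interiorPt j ∈ witness n ↔ j < 3 := by
  simp [witness]

theorem forall_mem_witness {n : ℕ} {p : Pt 2 → Prop} :
    (∀ P ∈ witness n, p P) ↔
      (∀ i, 1 ≤ i → i ≤ n → p (parabolaPt i)) ∧ ∀ j < 3, p (interiorPt j) := by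
  simp only [witness, forall_mem_union, forall_mem_image, mem_Icc, mem_range, and_imp]

theorem one_le_sq_of_ne_zero {m : ℤ} (h : m ≠ 0) : (1 : ℝ) ≤ (m : ℝ) ^ 2 := by
  have : (1 : ℤ) ≤ m ^ 2 := by nlinarith [Int.one_le_abs h, sq_abs m]
  exact_mod_cast this

theorem nine_div_four_le_sq_sub_half {m : ℤ} (h₀ : m ≠ 0) (h₁ : m ≠ 1) :
    (9 / 4 : ℝ) ≤ ((m : ℝ) - 1 / 2) ^ 2 := by
  rcases (by omega : m ≤ -1 ∨ 2 ≤ m) with h | h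
  · have : (m : ℝ) ≤ -1 := by exact_mod_cast h
    nlinarith
  · have : (2 : ℝ) ≤ m := by exact_mod_cast h
    nlinarith

theorem isCutOff_singleton_parabolaPt (n i : ℕ) : IsCutOff (witness n) {parabolaPt i} := by
  refine isCutOff_of_lensValue i (1 / 4) (by simp [parabolaPt]) ?_
  refine forall_mem_witness.2 ⟨fun m _ _ hm => ?_, fun j _ _ => ?_⟩
  · have := one_le_sq_of_ne_zero (m := m - i) (by simp_all; omega)
    push_cast at this
    simp [parabolaPt]; linarith
  · have := sq_nonneg ((2 * j : ℝ) + 3 / 2 - i)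
    simp [interiorPt]; linarith

theorem isCutOff_pair_parabolaPt (n a : ℕ) :
    IsCutOff (witness n) {parabolaPt a, parabolaPt (a + 1)} := by
  refine isCutOff_of_lensValue (a + 1 / 2) (5 / 16) (by simp [parabolaPt]; norm_num) ?_
  refine forall_mem_witness.2 ⟨fun m _ _ hm => ?_, fun j _ _ => ?_⟩
  · simp only [mem_insert, mem_singleton, parabolaPt_inj, not_or] at hm
    have := nine_div_four_le_sq_sub_half (m := m - a) (by omega) (by omega)
    push_cast at this
    simp [parabolaPt]; linarith
  · have := sq_nonneg ((2 * j : ℝ) + 3 / 2 - (a + 1 / 2))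
    simp [interiorPt]; linarith

theorem isCutOff_parabolaPt_interiorPt (n : ℕ) {a k : ℕ} (ha : a = 2 * k + 1 ∨ a = 2 * k + 2) :
    IsCutOff (witness n) {parabolaPt a, interiorPt k} := by
  have hk : ((2 * k : ℝ) + 3 / 2 - a) ^ 2 = 1 / 4 := by
    rcases ha with rfl | rfl <;> push_cast <;> ring
  refine isCutOff_of_lensValue a (3 / 4) (by simp [parabolaPt, interiorPt, hk]; norm_num) ?_
  refine forall_mem_witness.2 ⟨fun m _ _ hm => ?_, fun j _ hj => ?_⟩
  · simp only [mem_insert, mem_singleton, parabolaPt_inj, not_or] at hm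
    have := one_le_sq_of_ne_zero (m := m - a) (by omega)
    push_cast at this
    simp [parabolaPt]; linarith
  · simp only [mem_insert, mem_singleton, interiorPt_inj, not_or] at hj
    have := nine_div_four_le_sq_sub_half (m := 2 * j + 2 - a) (by omega) (by omega)
    push_cast at this
    simp [interiorPt]; linarith

theorem isCutOff_witness_six (n : ℕ) : IsCutOff (witness n) (witness 6) := by
  refine isCutOff_of_lensValue (7 / 2) 9
    (forall_mem_witness.2 ⟨fun i hi₁ hi₆ => ?_, fun j hj => ?_⟩)
    (forall_mem_witness.2 ⟨fun i _ _ hi => ?_, fun j hj hj' => ?_⟩)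
  · have : (1 : ℝ) ≤ i := by exact_mod_cast hi₁
    have : (i : ℝ) ≤ 6 := by exact_mod_cast hi₆
    simp [parabolaPt]; nlinarith
  · interval_cases j <;> norm_num [interiorPt]
  · have : (7 : ℝ) ≤ i := by exact_mod_cast (by simp_all; omega : 7 ≤ i)
    simp [parabolaPt]; nlinarith
  · simp_all

noncomputable def edgeTriple (k : ℕ) : Finset (Pt 2) :=
  {parabolaPt (2 * k + 1), parabolaPt (2 * k + 2), interiorPt k}

theorem isCutOff_pair_of_mem_edgeTriple (n : ℕ) {k : ℕ} {P Q : Pt 2} (hP : P ∈ edgeTriple k)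
    (hQ : Q ∈ edgeTriple k) (hPQ : P ≠ Q) : IsCutOff (witness n) {P, Q} := by
  simp only [edgeTriple, mem_insert, mem_singleton] at hP hQ
  have h₁ := isCutOff_pair_parabolaPt n (2 * k + 1)
  have h₂ := isCutOff_parabolaPt_interiorPt n (a := 2 * k + 1) (k := k) (Or.inl rfl)
  have h₃ := isCutOff_parabolaPt_interiorPt n (a := 2 * k + 2) (k := k) (Or.inr rfl)
  rcases hP with rfl | rfl | rfl <;> rcases hQ with rfl | rfl | rfl
  all_goals first
    | assumption
    | rwa [pair_comm]
    | exact absurd rfl hPQ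

theorem witness_six_subset_biUnion_edgeTriple : witness 6 ⊆ (range 3).biUnion edgeTriple := by
  intro P hP
  simp only [witness, mem_union, mem_image, mem_Icc, mem_range] at hP
  simp only [mem_biUnion, mem_range, edgeTriple, mem_insert, mem_singleton]
  rcases hP with ⟨i, hi, rfl⟩ | ⟨j, hj, rfl⟩
  · refine ⟨(i - 1) / 2, by omega, ?_⟩
    simp only [parabolaPt_inj, parabolaPt_ne_interiorPt]
    omega
  · exact ⟨j, hj, by simp⟩

section Witness

variable {n t : ℕ} {A B : Finset (Pt 2)}

theorem IsTolerant2.add_two_le_card_of_witness (ht : 3 ≤ t) (hT : IsTolerant2 t (witness n) A B)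
    (hS : A ∪ B = witness n) (hd : Disjoint A B) : t + 2 ≤ #B := by
  have hB := hT.lt_card_right (hS ▸ subset_union_right)
  obtain ⟨i, hi⟩ : ∃ i, parabolaPt i ∈ B := by
    by_contra! h
    have hBi : B ⊆ (range 3).image interiorPt := fun P hP => by
      have hPS : P ∈ witness n := hS ▸ mem_union_right A hP
      simp only [witness, mem_union, mem_image] at hPS
      rcases hPS with ⟨i, -, rfl⟩ | hP'
      · exact absurd hP (h i)
      · exact mem_image.2 hP'
    have := (card_le_card hBi).trans card_image_le
    rw [card_range] at this
    omega
  have := hT.add_card_lt_card hS hd (singleton_subset_iff.2 hi)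
    (isCutOff_singleton_parabolaPt n i)
  rw [card_singleton] at this
  omega

theorem IsTolerant2.card_inter_edgeTriple_le_one (hT : IsTolerant2 t (witness n) A B)
    (hS : A ∪ B = witness n) (hd : Disjoint A B) (hB : #B = t + 2) (k : ℕ) :
    #(B ∩ edgeTriple k) ≤ 1 := by
  refine card_le_one.2 fun P hP Q hQ => ?_
  rw [mem_inter] at hP hQ
  by_contra hPQ
  have := hT.add_card_lt_card hS hd (insert_subset hP.1 (singleton_subset_iff.2 hQ.1))
    (isCutOff_pair_of_mem_edgeTriple n hP.2 hQ.2 hPQ)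
  rw [card_pair hPQ] at this
  omega

theorem not_isTolerant2_witness (hn : 6 ≤ n) (hS : A ∪ B = witness n) (hd : Disjoint A B)
    (hB : #B = t + 2) (hA : #A ≤ t + 3) : ¬ IsTolerant2 t (witness n) A B := by
  intro hT
  have hB₆ : #(B ∩ witness 6) ≤ 3 := calc
    #(B ∩ witness 6) ≤ #((range 3).biUnion fun k => B ∩ edgeTriple k) := by
      refine card_le_card fun P hP => ?_
      rw [mem_inter] at hP
      obtain ⟨k, hk, hPk⟩ := mem_biUnion.1 (witness_six_subset_biUnion_edgeTriple hP.2)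
      exact mem_biUnion.2 ⟨k, hk, mem_inter.2 ⟨hP.1, hPk⟩⟩
    _ ≤ ∑ k ∈ range 3, #(B ∩ edgeTriple k) := card_biUnion_le
    _ ≤ ∑ _k ∈ range 3, 1 := sum_le_sum fun k _ => hT.card_inter_edgeTriple_le_one hS hd hB k
    _ = 3 := by simp
  have hsplit : #(A ∩ witness 6) + #(B ∩ witness 6) = 9 := by
    rw [← card_union_of_disjoint (hd.mono inter_subset_left inter_subset_left),
      ← union_inter_distrib_right, hS, inter_eq_right.2 (witness_mono hn), card_witness]
  have hcut := hT.lt_card_inter_add_card_sdiff hS (isCutOff_witness_six n)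
  have := card_sdiff_add_card_inter A (witness 6)
  omega

end Witness

/-- Theorem 3: for every `t ≥ 3` there is a set of `2t + 5` points in the plane with no
`t`-tolerant partition into two parts; hence `N(2,2,t) ≥ 2t + 6`. -/
theorem lower_bound_N22t (t : ℕ) (ht : 3 ≤ t) :
    ∃ S : Finset (Pt 2), S.card = 2 * t + 5 ∧
      ∀ A B : Finset (Pt 2), A ∪ B = S → Disjoint A B → ¬ IsTolerant2 t S A B := by
  refine ⟨witness (2 * t + 2), card_witness _, fun A B hS hd hT => ?_⟩
  have hcard : #A + #B = 2 * t + 5 := by rw [← card_union_of_disjoint hd, hS, card_witness]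
  have hA := hT.symm.add_two_le_card_of_witness ht (union_comm A B ▸ hS) hd.symm
  have hB := hT.add_two_le_card_of_witness ht hS hd
  rcases (by omega : #B = t + 2 ∨ #A = t + 2) with h | h
  · exact not_isTolerant2_witness (by omega) hS hd h (by omega) hT
  · exact not_isTolerant2_witness (by omega) (union_comm A B ▸ hS) hd.symm h (by omega) hT.symm
end

section
/- N(1,k,t) ≥ k(t+2)−1 is not attained below: there exists a set of k(t+2)−2 points on the real line admitting no t-tolerant partition into k parts, and every set of k(t+2)−1 points on the line admits one; i.e., N(1,k,t) = k(t+2)−1. -/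
open Finset

/-- A family `Q` of `k` finsets is a partition of the finite set `P ⊆ ℝ`. -/
def IsPartitionR {k : ℕ} (P : Finset ℝ) (Q : Fin k → Finset ℝ) : Prop :=
  (∀ i j : Fin k, i ≠ j → Disjoint (Q i) (Q j)) ∧ P = Finset.univ.biUnion Q

/-- The partition `Q` of `P ⊆ ℝ` is `t`-tolerant. -/
def IsTolerantR {k : ℕ} (t : ℕ) (P : Finset ℝ) (Q : Fin k → Finset ℝ) : Prop :=
  ∀ Y ⊆ P, Y.card ≤ t →
    (⋂ i : Fin k, convexHull ℝ ((Q i \ Y : Finset ℝ) : Set ℝ)).Nonempty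

lemma convexHull_finset_real (s : Finset ℝ) (h : s.Nonempty) :
    convexHull ℝ (s : Set ℝ) = Set.Icc (s.min' h) (s.max' h) := by
  apply subset_antisymm
  · exact convexHull_min (fun x hx => ⟨s.min'_le x hx, s.le_max' x hx⟩) (convex_Icc _ _)
  · rw [← segment_eq_Icc (s.min'_le _ (s.max'_mem h)), ← convexHull_pair]
    exact convexHull_mono (by
      intro x hx
      rcases Set.mem_insert_iff.1 hx with rfl | hx
      · exact s.min'_mem h
      · simp at hx; subst hx; exact s.max'_mem h)

lemma lower_aux (k t : ℕ) (hk : 2 ≤ k) (ht : 1 ≤ t) (S : Finset ℝ)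
    (hS : S.card = k * (t + 2) - 2) (Q : Fin k → Finset ℝ)
    (hP : IsPartitionR S Q) (htol : IsTolerantR t S Q) : False := by
  obtain ⟨hdisj, hunion⟩ := hP
  have hQsub : ∀ i, Q i ⊆ S := fun i => by
    rw [hunion]; exact Finset.subset_biUnion_of_mem Q (mem_univ i)
  by_cases hsmall : ∃ j, (Q j).card ≤ t
  · obtain ⟨j, hj⟩ := hsmall
    obtain ⟨x, hx⟩ := htol (Q j) (hQsub j) hj
    have := Set.mem_iInter.1 hx j
    rw [Finset.sdiff_self] at this
    simp at this
  · push_neg at hsmall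
    have hge : ∀ i, t + 1 ≤ (Q i).card := fun i => hsmall i
    have hsum : ∑ i, (Q i).card = k * (t + 2) - 2 := by
      rw [← Finset.card_biUnion (fun a _ b _ hab => hdisj a b hab), ← hunion, hS]
    set B := univ.filter (fun i : Fin k => (Q i).card = t + 1) with hB
    have hBcard : 2 ≤ B.card := by
      by_contra hlt
      push_neg at hlt
      set F := univ.filter (fun i : Fin k => ¬ (Q i).card = t + 1) with hF
      have hFk : B.card + F.card = k := by
        rw [hB, hF, Finset.card_filter_add_card_filter_not]; simp
      have hstep : F.card ≤ ∑ i, ((Q i).card - (t+1)) := by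
        calc F.card = ∑ _i ∈ F, 1 := by simp
        _ ≤ ∑ i ∈ F, ((Q i).card - (t+1)) := Finset.sum_le_sum (fun i hi => by
              have := hge i; have h3 := (mem_filter.1 hi).2; omega)
        _ ≤ ∑ i, ((Q i).card - (t+1)) := Finset.sum_le_sum_of_subset (Finset.filter_subset _ _)
      have hsplit : ∑ i, (Q i).card = ∑ _i : Fin k, (t+1) + ∑ i, ((Q i).card - (t+1)) := by
        rw [← Finset.sum_add_distrib]
        exact Finset.sum_congr rfl (fun i _ => by have := hge i; omega)
      have hconst : ∑ _i : Fin k, (t+1) = k * (t+1) := by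
        simp [Finset.sum_const, Finset.card_univ, mul_comm]
      have hmul : k * (t+2) = k * (t+1) + k := by ring
      omega
    obtain ⟨i, hiB, j, hjB, hij⟩ := Finset.one_lt_card.1 hBcard
    have hci : (Q i).card = t + 1 := (mem_filter.1 hiB).2
    have hcj : (Q j).card = t + 1 := (mem_filter.1 hjB).2
    have hne : ∀ a, (Q a).card = t + 1 → (Q a).Nonempty := fun a ha =>
      Finset.card_pos.1 (by omega)
    -- helper: if min' (Q a) < min' (Q b), contradiction
    have key : ∀ a b : Fin k, a ≠ b → (Q a).card = t + 1 → (Q b).card = t + 1 →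
        ∀ (hna : (Q a).Nonempty) (hnb : (Q b).Nonempty),
        (Q a).min' hna < (Q b).min' hnb → False := by
      intro a b hab hca hcb hna hnb hlt
      set u := (Q a).min' hna
      set Y := (Q a).erase u with hY
      have hYsub : Y ⊆ S := (Finset.erase_subset _ _).trans (hQsub a)
      have hYcard : Y.card ≤ t := by
        rw [hY, Finset.card_erase_of_mem ((Q a).min'_mem hna)]; omega
      obtain ⟨x, hx⟩ := htol Y hYsub hYcard
      have hxa := Set.mem_iInter.1 hx a
      have hxb := Set.mem_iInter.1 hx b
      have hQaY : Q a \ Y = {u} := by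
        rw [hY, Finset.erase_eq, Finset.sdiff_sdiff_self_left,
          Finset.inter_singleton_of_mem ((Q a).min'_mem hna)]
      have hQbY : Q b \ Y = Q b := by
        apply Finset.sdiff_eq_self_of_disjoint
        exact Finset.disjoint_of_subset_right ((Finset.erase_subset _ _)) (hdisj b a hab.symm)
      rw [hQaY] at hxa
      rw [hQbY] at hxb
      simp only [Finset.coe_singleton, convexHull_singleton, Set.mem_singleton_iff] at hxa
      subst hxa
      rw [convexHull_finset_real _ hnb] at hxb
      exact absurd hxb.1 (by push_neg; exact hlt)
    have huv : (Q i).min' (hne i hci) ≠ (Q j).min' (hne j hcj) := by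
      intro h
      exact Finset.disjoint_left.1 (hdisj i j hij) ((Q i).min'_mem _)
        (h ▸ (Q j).min'_mem _)
    rcases lt_or_gt_of_ne huv with h | h
    · exact key i j hij hci hcj _ _ h
    · exact key j i hij.symm hcj hci _ _ h

lemma block_card (n k' : ℕ) (hk' : 0 < k') (hn : 0 < n) (f : Fin n → ℝ)
    (hf : Function.Injective f) (c r : ℕ) (hcr : ∀ s < r, c + s * k' < n) :
    ((Finset.range r).image
      (fun s => f ⟨(c + s * k') % n, Nat.mod_lt _ hn⟩)).card = r := by
  rw [Finset.card_image_of_injOn, Finset.card_range]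
  intro s hs s' hs' hss
  have h1 := hcr s (Finset.mem_range.1 hs)
  have h2 := hcr s' (Finset.mem_range.1 hs')
  have hv : (c + s * k') % n = (c + s' * k') % n :=
    congrArg Fin.val (hf hss)
  rw [Nat.mod_eq_of_lt h1, Nat.mod_eq_of_lt h2] at hv
  have : s * k' = s' * k' := by omega
  exact Nat.eq_of_mul_eq_mul_right hk' this

lemma upper_aux (k t : ℕ) (hk : 2 ≤ k) (ht : 1 ≤ t) (S : Finset ℝ)
    (hS : S.card = k * (t + 2) - 1) :
    ∃ Q : Fin k → Finset ℝ, IsPartitionR S Q ∧ IsTolerantR t S Q := by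
  set n := k * (t + 2) - 1 with hn
  have hkpos : 0 < k := by omega
  have hnpos : 0 < n := by
    have : 2 * (t + 2) ≤ k * (t + 2) := Nat.mul_le_mul_right _ hk
    omega
  have hn1 : k * (t + 1) ≤ n := by
    have : k * (t + 2) = k * (t + 1) + k := by ring
    omega
  have e := S.orderIsoOfFin hS
  set f : Fin n → ℝ := fun m => (e m : ℝ) with hfdef
  have hf_mono : StrictMono f := fun a b hab => by
    exact_mod_cast (OrderIso.lt_iff_lt e).2 hab
  have hf_inj : Function.Injective f := hf_mono.injective
  have hf_mem : ∀ m, f m ∈ S := fun m => (e m).2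
  have hf_surj : ∀ x ∈ S, ∃ m, f m = x := fun x hx =>
    ⟨e.symm ⟨x, hx⟩, by simp [hfdef]⟩
  set Q : Fin k → Finset ℝ :=
    fun i => (univ.filter (fun m : Fin n => m.val % k = i.val)).image f with hQdef
  have hmemQ : ∀ (i : Fin k) (x : ℝ),
      x ∈ Q i ↔ ∃ m : Fin n, m.val % k = i.val ∧ f m = x := by
    intro i x
    simp [hQdef, Finset.mem_image]
  have hdisj : ∀ i j : Fin k, i ≠ j → Disjoint (Q i) (Q j) := by
    intro i j hij
    rw [Finset.disjoint_left]
    intro x hxi hxj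
    obtain ⟨m, hm, hfm⟩ := (hmemQ i x).1 hxi
    obtain ⟨m', hm', hfm'⟩ := (hmemQ j x).1 hxj
    have : m = m' := hf_inj (by rw [hfm, hfm'])
    exact hij (Fin.ext (by rw [← hm, ← hm', this]))
  have hunion : S = Finset.univ.biUnion Q := by
    ext x
    simp only [Finset.mem_biUnion, Finset.mem_univ, true_and]
    constructor
    · intro hx
      obtain ⟨m, hm⟩ := hf_surj x hx
      exact ⟨⟨m.val % k, Nat.mod_lt _ hkpos⟩, (hmemQ _ x).2 ⟨m, rfl, hm⟩⟩
    · rintro ⟨i, hx⟩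
      obtain ⟨m, _, hfm⟩ := (hmemQ i x).1 hx
      exact hfm ▸ hf_mem m
  refine ⟨Q, ⟨hdisj, hunion⟩, ?_⟩
  intro Y hYS hYcard
  -- index bounds
  have hidx : ∀ c s : ℕ, c < k → s ≤ t → c + s * k < n := by
    intro c s hc hs
    have h1 : s * k ≤ t * k := Nat.mul_le_mul_right k hs
    have h2 : k * (t + 1) = t * k + k := by ring
    omega
  have hidx2 : ∀ c s : ℕ, c + 2 ≤ k → s ≤ t + 1 → c + s * k < n := by
    intro c s hc hs
    have h1 : s * k ≤ (t + 1) * k := Nat.mul_le_mul_right k hs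
    have h2 : k * (t + 2) = (t + 1) * k + k := by ring
    omega
  -- membership of block elements in parts
  have hblockmem : ∀ (c : ℕ) (hc : c < k) (s : ℕ) (hlt : c + s * k < n),
      f ⟨(c + s * k) % n, Nat.mod_lt _ hnpos⟩ ∈ Q ⟨c, hc⟩ := by
    intro c hc s hlt
    apply (hmemQ _ _).2
    refine ⟨_, ?_, rfl⟩
    simp only
    rw [Nat.mod_eq_of_lt hlt, Nat.add_mul_mod_self_right, Nat.mod_eq_of_lt hc]
  -- each part has at least t+1 elements
  have hQcard : ∀ i : Fin k, t + 1 ≤ (Q i).card := by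
    intro i
    have hsub : ((Finset.range (t+1)).image
        (fun s => f ⟨(i.val + s * k) % n, Nat.mod_lt _ hnpos⟩)) ⊆ Q i := by
      intro x hx
      obtain ⟨s, hs, rfl⟩ := Finset.mem_image.1 hx
      have hs' : s ≤ t := Nat.lt_succ_iff.1 (Finset.mem_range.1 hs)
      have := hblockmem i.val i.isLt s (hidx i.val s i.isLt hs')
      simpa using this
    have hcard := block_card n k hkpos hnpos f hf_inj i.val (t+1)
      (fun s hs => hidx i.val s i.isLt (Nat.lt_succ_iff.1 hs))
    calc t + 1 = _ := hcard.symm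
    _ ≤ (Q i).card := Finset.card_le_card hsub
  have hne : ∀ i : Fin k, (Q i \ Y).Nonempty := by
    intro i
    rw [← Finset.card_pos]
    have h1 := Finset.le_card_sdiff Y (Q i)
    have := hQcard i
    omega
  have hbelow : ∀ (i : Fin k) (x : ℝ), x ∈ Q i → x < (Q i \ Y).min' (hne i) → x ∈ Y := by
    intro i x hx hlt
    by_contra hxY
    exact absurd (Finset.min'_le _ x (Finset.mem_sdiff.2 ⟨hx, hxY⟩)) (not_le.2 hlt)
  have habove : ∀ (j : Fin k) (x : ℝ), x ∈ Q j → (Q j \ Y).max' (hne j) < x → x ∈ Y := by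
    intro j x hx hlt
    by_contra hxY
    exact absurd (Finset.le_max' _ x (Finset.mem_sdiff.2 ⟨hx, hxY⟩)) (not_le.2 hlt)
  have key : ∀ i j : Fin k,
      (Q i \ Y).min' (hne i) ≤ (Q j \ Y).max' (hne j) := by
    intro i j
    by_contra hcon
    push_neg at hcon
    have hij : i ≠ j := by
      rintro rfl
      exact absurd (Finset.min'_le _ _ ((Q i \ Y).max'_mem (hne i))) (not_le.2 hcon)
    have hminmem : (Q i \ Y).min' (hne i) ∈ Q i :=
      (Finset.mem_sdiff.1 ((Q i \ Y).min'_mem (hne i))).1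
    obtain ⟨m, hmres, hfm⟩ := (hmemQ i _).1 hminmem
    set a := m.val / k with ha
    have hmval : m.val = i.val + a * k := by
      have h1 := Nat.div_add_mod m.val k
      have h2 : k * (m.val / k) = a * k := by rw [ha, mul_comm]
      omega
    -- the a elements of Q i below the surviving minimum are all removed
    have hT1sub : ∀ s < a, f ⟨(i.val + s * k) % n, Nat.mod_lt _ hnpos⟩ ∈ Y := by
      intro s hsa
      have hsn : i.val + s * k < n := by
        have : s * k < a * k := (Nat.mul_lt_mul_right hkpos).2 hsa
        omega
      apply hbelow i
      · have := hblockmem i.val i.isLt s hsn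
        simpa using this
      · rw [← hfm]
        apply hf_mono
        rw [Fin.lt_def]
        simp only
        rw [Nat.mod_eq_of_lt hsn, hmval]
        have : s * k < a * k := (Nat.mul_lt_mul_right hkpos).2 hsa
        omega
    by_cases hat : t + 1 ≤ a
    · -- already t+1 removed points: contradiction
      have hsub : ((Finset.range (t+1)).image
          (fun s => f ⟨(i.val + s * k) % n, Nat.mod_lt _ hnpos⟩)) ⊆ Y := by
        intro x hx
        obtain ⟨s, hs, rfl⟩ := Finset.mem_image.1 hx
        exact hT1sub s (by have := Finset.mem_range.1 hs; omega)
      have hcard := block_card n k hkpos hnpos f hf_inj i.val (t+1)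
        (fun s hs => hidx i.val s i.isLt (Nat.lt_succ_iff.1 hs))
      have := Finset.card_le_card hsub
      omega
    · push_neg at hat
      -- a ≤ t
      set s₀ : ℕ := if i.val < j.val then a else a + 1 with hs₀
      set T₁ := (Finset.range a).image
        (fun s => f ⟨(i.val + s * k) % n, Nat.mod_lt _ hnpos⟩) with hT₁
      set T₂ := (Finset.range (t + 1 - a)).image
        (fun s => f ⟨(j.val + (s₀ + s) * k) % n, Nat.mod_lt _ hnpos⟩) with hT₂
      have hT2idx : ∀ s, s < t + 1 - a → j.val + (s₀ + s) * k < n := by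
        intro s hs
        rcases lt_or_ge i.val j.val with hij' | hij'
        · have : s₀ = a := if_pos hij'
          exact hidx j.val (s₀ + s) j.isLt (by omega)
        · have h0 : s₀ = a + 1 := if_neg (by omega)
          have hjk : j.val + 2 ≤ k := by
            have := i.isLt
            have : j.val < i.val := by
              rcases Nat.lt_or_ge j.val i.val with h | h
              · exact h
              · exact absurd (Fin.ext (by omega) : i = j) hij
            omega
          exact hidx2 j.val (s₀ + s) hjk (by omega)
      have hT2gt : ∀ s, s < t + 1 - a → m.val < j.val + (s₀ + s) * k := by
        intro s hs
        rcases lt_or_ge i.val j.val with hij' | hij'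
        · have h0 : s₀ = a := if_pos hij'
          have : a * k ≤ (s₀ + s) * k := Nat.mul_le_mul_right k (by omega)
          omega
        · have h0 : s₀ = a + 1 := if_neg (by omega)
          have h1 : (a + 1) * k ≤ (s₀ + s) * k := Nat.mul_le_mul_right k (by omega)
          have h2 : (a + 1) * k = a * k + k := by ring
          have := i.isLt
          omega
      have hT2sub : T₂ ⊆ Y := by
        intro x hx
        obtain ⟨s, hs, rfl⟩ := Finset.mem_image.1 hx
        have hs' := Finset.mem_range.1 hs
        have hsn := hT2idx s hs'
        apply habove j
        · have := hblockmem j.val j.isLt (s₀ + s) hsn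
          simpa using this
        · refine lt_trans hcon ?_
          rw [← hfm]
          apply hf_mono
          rw [Fin.lt_def]
          simp only
          rw [Nat.mod_eq_of_lt hsn]
          exact hT2gt s hs'
      have hT1sub' : T₁ ⊆ Y := by
        intro x hx
        obtain ⟨s, hs, rfl⟩ := Finset.mem_image.1 hx
        exact hT1sub s (Finset.mem_range.1 hs)
      have hT1Q : T₁ ⊆ Q i := by
        intro x hx
        obtain ⟨s, hs, rfl⟩ := Finset.mem_image.1 hx
        have hsa := Finset.mem_range.1 hs
        have hsn : i.val + s * k < n := by
          have : s * k < a * k := (Nat.mul_lt_mul_right hkpos).2 hsa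
          omega
        have := hblockmem i.val i.isLt s hsn
        simpa using this
      have hT2Q : T₂ ⊆ Q j := by
        intro x hx
        obtain ⟨s, hs, rfl⟩ := Finset.mem_image.1 hx
        have := hblockmem j.val j.isLt (s₀ + s) (hT2idx s (Finset.mem_range.1 hs))
        simpa using this
      have hdisjT : Disjoint T₁ T₂ :=
        Finset.disjoint_of_subset_left hT1Q (Finset.disjoint_of_subset_right hT2Q (hdisj i j hij))
      have hc1 : T₁.card = a := by
        rw [hT₁]
        exact block_card n k hkpos hnpos f hf_inj i.val a (fun s hs => by
          have : s * k < a * k := (Nat.mul_lt_mul_right hkpos).2 hs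
          omega)
      have hc2 : T₂.card = t + 1 - a := by
        rw [hT₂, Finset.card_image_of_injOn, Finset.card_range]
        intro s hs s' hs' hss
        simp only [Finset.coe_range, Set.mem_Iio] at hs hs'
        have h1 := hT2idx s hs
        have h2 := hT2idx s' hs'
        have hv : (j.val + (s₀ + s) * k) % n = (j.val + (s₀ + s') * k) % n :=
          congrArg Fin.val (hf_inj hss)
        rw [Nat.mod_eq_of_lt h1, Nat.mod_eq_of_lt h2] at hv
        have h3 : (s₀ + s) * k = (s₀ + s') * k := by omega
        have := Nat.eq_of_mul_eq_mul_right hkpos h3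
        omega
      have hunioncard : (T₁ ∪ T₂).card = t + 1 := by
        rw [Finset.card_union_of_disjoint hdisjT, hc1, hc2]
        omega
      have : T₁ ∪ T₂ ⊆ Y := Finset.union_subset hT1sub' hT2sub
      have := Finset.card_le_card this
      omega
  have hNE : Nonempty (Fin k) := ⟨⟨0, hkpos⟩⟩
  refine ⟨univ.sup' Finset.univ_nonempty (fun i => (Q i \ Y).min' (hne i)), ?_⟩
  rw [Set.mem_iInter]
  intro j
  rw [convexHull_finset_real _ (hne j)]
  constructor
  · exact Finset.le_sup' (f := fun i => (Q i \ Y).min' (hne i)) (Finset.mem_univ j)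
  · exact Finset.sup'_le _ _ (fun i _ => key i j)

/-- Mulzer–Stein: `N(1,k,t) = k(t+2) - 1`.  There is a set of `k(t+2) - 2` points on the
real line with no `t`-tolerant partition into `k` parts, and every set of `k(t+2) - 1`
points on the line admits one. -/
theorem N1kt_eq (k t : ℕ) (hk : 2 ≤ k) (ht : 1 ≤ t) :
    (∃ S : Finset ℝ, S.card = k * (t + 2) - 2 ∧
      ∀ Q : Fin k → Finset ℝ, IsPartitionR S Q → ¬ IsTolerantR t S Q) ∧
    (∀ S : Finset ℝ, S.card = k * (t + 2) - 1 →
      ∃ Q : Fin k → Finset ℝ, IsPartitionR S Q ∧ IsTolerantR t S Q) := by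
  constructor
  · refine ⟨(Finset.range (k * (t + 2) - 2)).image (Nat.cast : ℕ → ℝ), ?_, ?_⟩
    · rw [Finset.card_image_of_injective _ Nat.cast_injective, Finset.card_range]
    · intro Q hP htol
      exact lower_aux k t hk ht _
        (by rw [Finset.card_image_of_injective _ Nat.cast_injective, Finset.card_range])
        Q hP htol
  · intro S hS
    exact upper_aux k t hk ht S hS
end
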